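/- Let π=(B_1,…,B_k) be any ordered multiset partition (k≥1). Then minimaj(B_1,…,B_k) = minimaj(B_1,…,B_{k−1},{min(B_k)}); that is, the minimaj statistic depends on the last block only through its minimum element. -/

import Mathlib

open scoped BigOperators

namespace omp

/-- The multiset `A(β) ∪ {0^r}`: the letter `i` (for `1 ≤ i ≤ m`) with multiplicity `β_i`,
together with `r` copies of the letter `0`. -/
def content (r : ℕ) (β : List ℕ) : Multiset ℕ :=
  Multiset.replicate r 0 +
    ∑ i ∈ Finset.range β.length, Multiset.replicate (β.getD i 0) (i + 1)

/-- `π` is an ordered multiset partition of `A(β) ∪ {0^r}` into `k` (nonempty) blocks,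
with `0` allowed anywhere: the set `OP^all_{r;β,k}`. -/
def IsOPall (r : ℕ) (β : List ℕ) (k : ℕ) (π : List (Finset ℕ)) : Prop :=
  π.length = k ∧ (∀ B ∈ π, B.Nonempty) ∧ (π.map Finset.val).sum = content r β

/-- Additionally, the last block does not contain `0`: the set `OP_{r;β,k}`. -/
def IsOP (r : ℕ) (β : List ℕ) (k : ℕ) (π : List (Finset ℕ)) : Prop :=
  IsOPall r β k π ∧ 0 ∉ π.getLastD ∅

/-- Ordered multiset partitions of `A(β) ∪ {0^r}` with shape `α`: `OP^all_{r;β,α}`. -/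
def IsOPallSh (r : ℕ) (β α : List ℕ) (π : List (Finset ℕ)) : Prop :=
  (∀ B ∈ π, B.Nonempty) ∧ (π.map Finset.val).sum = content r β ∧
    π.map Finset.card = α

/-- Shape `α` and last block avoiding `0`: `OP_{r;β,α}`. -/
def IsOPSh (r : ℕ) (β α : List ℕ) (π : List (Finset ℕ)) : Prop :=
  IsOPallSh r β α π ∧ 0 ∉ π.getLastD ∅

/-- The `i`-th block (0-indexed). -/
def blk (π : List (Finset ℕ)) (i : ℕ) : Finset ℕ := π.getD i ∅

open Classical in
/-- `inv`: pairs of a letter `a` in block `B_i` and the minimum `b` of a later block `B_j`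
with `a > b`. -/
noncomputable def inv (π : List (Finset ℕ)) : ℕ :=
  ∑ i ∈ Finset.range π.length, ∑ j ∈ Finset.range π.length,
    if i < j then
      ((blk π i).filter (fun (a : ℕ) => (blk π j).min < (a : WithBot ℕ))).card
    else 0

/-- The word `σ(π)`: each block written in decreasing order, blocks concatenated. -/
def sigmaWord (π : List (Finset ℕ)) : List ℕ :=
  (π.map (fun B => (B.sort (· ≤ ·)).reverse)).flatten

/-- The word `ind(π) = 0^{|B_1|} 1^{|B_2|} ⋯ (k-1)^{|B_k|}`. -/
def indWord (π : List (Finset ℕ)) : List ℕ :=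
  ((π.zipIdx.map Prod.swap).map (fun p => List.replicate p.2.card p.1)).flatten

/-- The major index of a word (positions are 1-based). -/
def majW (w : List ℕ) : ℕ :=
  ∑ i ∈ Finset.range (w.length - 1),
    if w.getD (i + 1) 0 < w.getD i 0 then i + 1 else 0

/-- `maj(π)`: the sum of `ind(π)_{i+1}` over descents `σ_i > σ_{i+1}` of `σ(π)`. -/
def maj (π : List (Finset ℕ)) : ℕ :=
  ∑ i ∈ Finset.range ((sigmaWord π).length - 1),
    if (sigmaWord π).getD (i + 1) 0 < (sigmaWord π).getD i 0 then
      (indWord π).getD (i + 1) 0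
    else 0

/-- `dinv(π)`: primary and secondary diagonal inversions, where `B_i^h` is the `h`-th smallest
element of block `B_i` (here `h` is 0-indexed). -/
def dinv (π : List (Finset ℕ)) : ℕ :=
  ∑ i ∈ Finset.range π.length, ∑ j ∈ Finset.range π.length,
    if i < j then
      ((Finset.range (blk π i).card).filter (fun h =>
          h < (blk π j).card ∧
            ((blk π j).sort (· ≤ ·)).getD h 0 < ((blk π i).sort (· ≤ ·)).getD h 0)).card +
      ((Finset.range (blk π i).card).filter (fun h =>
          h + 1 < (blk π j).card ∧
            ((blk π j).sort (· ≤ ·)).getD (h + 1) 0 < ((blk π i).sort (· ≤ ·)).getD h 0)).card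
    else 0

/-- `miniword(π)`, built from right to left: the last block in increasing order; inductively,
if the word built so far begins with `s`, block `B_i` contributes its elements greater than `s`
in increasing order followed by its elements at most `s` in increasing order. -/
def miniword : List (Finset ℕ) → List ℕ
  | [] => []
  | B :: rest =>
    match miniword rest with
    | [] => B.sort (· ≤ ·)
    | s :: w =>
        ((B.filter (fun x => s < x)).sort (· ≤ ·) ++
          (B.filter (fun x => x ≤ s)).sort (· ≤ ·)) ++ s :: w

/-- `minimaj(π) = maj(miniword(π))`. -/
def minimaj (π : List (Finset ℕ)) : ℕ := majW (miniword π)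

/-- `D^{stat}_{r;β,k}(q) = Σ_{π ∈ OP_{r;β,k}} q^{stat(π)}` (the set is finite, so the
finite-support sum below is the intended polynomial). -/
noncomputable def D (r : ℕ) (β : List ℕ) (k : ℕ)
    (stat : List (Finset ℕ) → ℕ) : Polynomial ℕ :=
  ∑ᶠ π ∈ {π | IsOP r β k π}, Polynomial.X ^ stat π

/-- `D^{stat+}_{r;β,k}(q) = Σ_{π ∈ OP^all_{r;β,k}} q^{stat(π)}`. -/
noncomputable def Dall (r : ℕ) (β : List ℕ) (k : ℕ)
    (stat : List (Finset ℕ) → ℕ) : Polynomial ℕ :=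
  ∑ᶠ π ∈ {π | IsOPall r β k π}, Polynomial.X ^ stat π

/-- `D^{stat}_{r;β,α}(q)`, the shape-refined generating function. -/
noncomputable def DSh (r : ℕ) (β α : List ℕ)
    (stat : List (Finset ℕ) → ℕ) : Polynomial ℕ :=
  ∑ᶠ π ∈ {π | IsOPSh r β α π}, Polynomial.X ^ stat π

/-- `D^{stat+}_{r;β,α}(q)`, the shape-refined generating function with `0` allowed
in the last block. -/
noncomputable def DallSh (r : ℕ) (β α : List ℕ)
    (stat : List (Finset ℕ) → ℕ) : Polynomial ℕ :=
  ∑ᶠ π ∈ {π | IsOPallSh r β α π}, Polynomial.X ^ stat π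

end omp

/-!
Each block of `miniword` is arranged according to the first letter of the word built from the
later blocks only, and the word built from `B_k` alone begins with `min B_k`. Hence replacing
`B_k` by `{min B_k}` leaves the prefix `u` contributed by `B_1, …, B_{k-1}` unchanged: the two
words are `u ++ sort B_k` and `u ++ [min B_k]`. The increasing tail of `sort B_k` has no
descents, so both words have the same major index.
-/

theorem Finset.sort_eq_min'_cons {α : Type*} [LinearOrder α] {s : Finset α} (hs : s.Nonempty) :
    s.sort (· ≤ ·) = s.min' hs :: (s.erase (s.min' hs)).sort (· ≤ ·) := by
  conv_lhs => rw [← Finset.insert_erase (s.min'_mem hs)]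
  exact Finset.sort_insert _ (fun b hb => s.min'_le b (Finset.mem_of_mem_erase hb))
    (Finset.notMem_erase _ _)

namespace omp

lemma majW_append_cons_of_pairwise (u : List ℕ) (m : ℕ) (v : List ℕ)
    (hmv : (m :: v).Pairwise (· ≤ ·)) :
    majW (u ++ m :: v) = majW (u ++ [m]) := by
  have getD_eq (j : ℕ) (hj : j ≤ u.length) : (u ++ m :: v).getD j 0 = (u ++ [m]).getD j 0 := by
    rcases hj.lt_or_eq with hj | rfl
    · rw [List.getD_append _ _ _ _ hj, List.getD_append _ _ _ _ hj]
    · simp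
  have no_descent (i : ℕ) (hi : u.length ≤ i) (hi' : i < u.length + v.length) :
      (u ++ m :: v).getD i 0 ≤ (u ++ m :: v).getD (i + 1) 0 := by
    rw [List.getD_append_right _ _ _ _ hi, List.getD_append_right _ _ _ _ (by omega),
      List.getD_eq_getElem _ _ (by simp; omega), List.getD_eq_getElem _ _ (by simp; omega)]
    exact hmv.rel_get_of_lt (a := ⟨i - u.length, by simp; omega⟩)
      (b := ⟨i + 1 - u.length, by simp; omega⟩) (by simp only [Fin.mk_lt_mk]; omega)
  have hlen : (u ++ m :: v).length - 1 = u.length + v.length := by simp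
  unfold majW
  rw [hlen, show (u ++ [m]).length - 1 = u.length by simp, ← Finset.sum_subset (Finset.range_subset_range.2 (Nat.le_add_right u.length v.length))]
  · refine Finset.sum_congr rfl fun i hi => ?_
    have hi := Finset.mem_range.1 hi
    rw [getD_eq i hi.le, getD_eq (i + 1) hi]
  · intro i hi hni
    simp only [Finset.mem_range, not_lt] at hi hni
    rw [if_neg (not_lt.2 (no_descent i hni hi))]

/-- The letters block `C` contributes to `miniword` in front of a word with first letter `s?`
(`none` for the empty word). -/
def blockWord (C : Finset ℕ) : Option ℕ → List ℕ
  | none => C.sort (· ≤ ·)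
  | some s => (C.filter (fun x => s < x)).sort (· ≤ ·) ++ (C.filter (fun x => x ≤ s)).sort (· ≤ ·)

lemma miniword_cons (C : Finset ℕ) (bs : List (Finset ℕ)) :
    miniword (C :: bs) = blockWord C (miniword bs).head? ++ miniword bs := by
  rw [miniword]
  cases miniword bs <;> simp [blockWord]

lemma exists_miniword_append_singleton (bs : List (Finset ℕ)) {B B' : Finset ℕ}
    (h : (B.sort (· ≤ ·)).head? = (B'.sort (· ≤ ·)).head?) :
    ∃ u, miniword (bs ++ [B]) = u ++ B.sort (· ≤ ·) ∧
      miniword (bs ++ [B']) = u ++ B'.sort (· ≤ ·) := by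
  induction bs with
  | nil => exact ⟨[], by simp [miniword], by simp [miniword]⟩
  | cons C bs ih =>
    obtain ⟨u, hB, hB'⟩ := ih
    have head_eq : (miniword (bs ++ [B])).head? = (miniword (bs ++ [B'])).head? := by
      rw [hB, hB', List.head?_append, List.head?_append, h]
    refine ⟨blockWord C (miniword (bs ++ [B])).head? ++ u, ?_, ?_⟩
    · rw [List.cons_append, miniword_cons, hB, List.append_assoc]
    · rw [List.cons_append, miniword_cons, head_eq, hB', List.append_assoc]

end omp

theorem minimaj_last_block_min_general (bs : List (Finset ℕ)) (B : Finset ℕ) (hB : B.Nonempty) :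
    omp.minimaj (bs ++ [B]) = omp.minimaj (bs ++ [{B.min' hB}]) := by
  have hsort := B.sort_eq_min'_cons hB
  obtain ⟨u, hw, hw'⟩ := omp.exists_miniword_append_singleton bs (B' := {B.min' hB})
    (by rw [hsort, Finset.sort_singleton]; rfl)
  rw [omp.minimaj, omp.minimaj, hw, hw', hsort, Finset.sort_singleton]
  exact omp.majW_append_cons_of_pairwise u _ _ (hsort ▸ B.pairwise_sort (· ≤ ·))

/-- `minimaj` depends on the last block only through its minimum:
`minimaj(B_1,…,B_k) = minimaj(B_1,…,B_{k−1},{min(B_k)})`. -/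
theorem minimaj_last_block_min (bs : List (Finset ℕ)) (B : Finset ℕ) (hB : B.Nonempty)
    (hbs : ∀ C ∈ bs, C.Nonempty) :
    omp.minimaj (bs ++ [B]) = omp.minimaj (bs ++ [{B.min' hB}]) :=
  minimaj_last_block_min_general bs B hB
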